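/- arXiv:2306.03561 — 6 statements merged into one kernel-verified Lean document; each statement's English description precedes it below -/
import Mathlib

section
/- In the abstract coloring setting, let c : ℕ → C → X follow an update rule F with F injective (as a function of the 4-tuple of its arguments), and let h : ℕ → C → Y follow an arbitrary update rule G. If the initial coloring c 0 refines h 0, then for every l ∈ ℕ, the coloring c l refines h l. (This is the direction c^t ⊑ h^t of the proof of Theorem 1: the CWL coloring, computed with an injective hash, refines the coloring produced by any CIN++ network at every layer.) -/
/-- A coloring `c : C → X` refines a coloring `d : C → Y` if equal `c`-colors
imply equal `d`-colors. -/
def Refines {C X Y : Type*} (c : C → X) (d : C → Y) : Prop :=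
  ∀ σ τ : C, c σ = c τ → d σ = d τ

/-- The coloring sequence `c` follows the update rule `F` with respect to the
boundary map `B`, upper-adjacency map `U` and lower-adjacency map `D`. -/
def Follows {C X : Type*} (B : C → Finset C) (U D : C → Finset (C × C))
    (c : ℕ → C → X)
    (F : X → Multiset X → Multiset (X × X) → Multiset (X × X) → X) : Prop :=
  ∀ (l : ℕ) (σ : C),
    c (l + 1) σ =
      F (c l σ) ((B σ).val.map (c l))
        ((U σ).val.map (fun p => (c l p.1, c l p.2)))
        ((D σ).val.map (fun p => (c l p.1, c l p.2)))

/-- `F` is injective as a function of the 4-tuple of its arguments. -/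
def Injective4 {X : Type*}
    (F : X → Multiset X → Multiset (X × X) → Multiset (X × X) → X) : Prop :=
  ∀ a₁ b₁ u₁ d₁ a₂ b₂ u₂ d₂,
    F a₁ b₁ u₁ d₁ = F a₂ b₂ u₂ d₂ → a₁ = a₂ ∧ b₁ = b₂ ∧ u₁ = u₂ ∧ d₁ = d₂

/-- If `c` refines `d` then equal multiset images under `c` imply equal
multiset images under `d`. -/
theorem Refines.map_eq {C X Y : Type*} {c : C → X} {d : C → Y}
    (hr : Refines c d) {s t : Multiset C} (hst : s.map c = t.map c) :
    s.map d = t.map d := by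
  induction s using Multiset.induction generalizing t with
  | empty =>
    simp only [Multiset.map_zero] at hst ⊢
    rw [eq_comm, Multiset.map_eq_zero] at hst
    simp [hst]
  | cons a s ih =>
    have hmem : c a ∈ t.map c := by
      rw [← hst]; simp
    obtain ⟨b, hb, hba⟩ := Multiset.mem_map.mp hmem
    obtain ⟨t', rfl⟩ := Multiset.exists_cons_of_mem hb
    simp only [Multiset.map_cons] at hst ⊢
    rw [hba.symm, Multiset.cons_inj_right] at hst
    rw [ih hst, hr a b hba.symm]

/-- an injective-hash coloring refines any other coloring sequence
at every layer, provided it does so initially. -/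
theorem injective_coloring_refines {C X Y : Type*}
    (B : C → Finset C) (U D : C → Finset (C × C))
    (c : ℕ → C → X) (h : ℕ → C → Y)
    (F : X → Multiset X → Multiset (X × X) → Multiset (X × X) → X)
    (G : Y → Multiset Y → Multiset (Y × Y) → Multiset (Y × Y) → Y)
    (hc : Follows B U D c F) (hh : Follows B U D h G)
    (hF : Injective4 F) (h0 : Refines (c 0) (h 0)) :
    ∀ l : ℕ, Refines (c l) (h l) := by
  intro l
  induction l with
  | zero => exact h0
  | succ l ih =>
    intro σ τ heq
    rw [hc l σ, hc l τ] at heq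
    obtain ⟨h1, h2, h3, h4⟩ := hF _ _ _ _ _ _ _ _ heq
    rw [hh l σ, hh l τ]
    have ih' : Refines (fun p : C × C => (c l p.1, c l p.2))
        (fun p : C × C => (h l p.1, h l p.2)) := by
      intro p q hpq
      simp only [Prod.mk.injEq] at hpq ⊢
      exact ⟨ih _ _ hpq.1, ih _ _ hpq.2⟩
    rw [ih _ _ h1, Refines.map_eq ih h2, Refines.map_eq ih' h3,
      Refines.map_eq ih' h4]
end

section
/- In the abstract coloring setting, let h : ℕ → C → Y follow an update rule G with G injective (as a function of the 4-tuple of its arguments), and let c : ℕ → C → X follow an arbitrary update rule F. If the initial coloring h 0 refines c 0, then for every l ∈ ℕ, the coloring h l refines c l. (This is the direction h^l ⊑ c^l of the proof of Theorem 1: a CIN++ network with injective neighbourhood aggregators produces, at every layer, a coloring at least as fine as the CWL coloring.) -/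
/-- a coloring sequence with an injective update rule refines any
other coloring sequence at every layer, provided it does so initially. -/
theorem injective_network_coloring_refines {C X Y : Type*}
    (B : C → Finset C) (U D : C → Finset (C × C))
    (c : ℕ → C → X) (h : ℕ → C → Y)
    (F : X → Multiset X → Multiset (X × X) → Multiset (X × X) → X)
    (G : Y → Multiset Y → Multiset (Y × Y) → Multiset (Y × Y) → Y)
    (hc : Follows B U D c F) (hh : Follows B U D h G)
    (hG : Injective4 G) (h0 : Refines (h 0) (c 0)) :
    ∀ l : ℕ, Refines (h l) (c l) := by
  intro l
  induction l with
  | zero => exact h0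
  | succ l ih =>
    intro σ τ heq
    -- factor c l through h l
    obtain ⟨f, hf⟩ : ∃ f : Y → X, ∀ ρ : C, c l ρ = f (h l ρ) := by
      classical
      refine ⟨fun y => if hy : ∃ ρ, h l ρ = y then c l hy.choose else
        (fun _ => c l σ) hy, fun ρ => ?_⟩
      have hy : ∃ ρ', h l ρ' = h l ρ := ⟨ρ, rfl⟩
      simp only [dif_pos hy]
      exact (ih _ _ hy.choose_spec).symm
    rw [hh l σ, hh l τ] at heq
    obtain ⟨e1, e2, e3, e4⟩ := hG _ _ _ _ _ _ _ _ heq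
    rw [hc l σ, hc l τ]
    congr 1
    · exact ih _ _ e1
    · have : ∀ s : Multiset C, s.map (c l) = (s.map (h l)).map f := by
        intro s
        rw [Multiset.map_map]
        exact Multiset.map_congr rfl fun ρ _ => hf ρ
      rw [this, this, e2]
    · have : ∀ s : Multiset (C × C),
          s.map (fun p => (c l p.1, c l p.2)) =
            (s.map (fun p => (h l p.1, h l p.2))).map (fun q => (f q.1, f q.2)) := by
        intro s
        rw [Multiset.map_map]
        exact Multiset.map_congr rfl fun p _ => by simp [hf p.1, hf p.2]
      rw [this, this, e3]
    · have : ∀ s : Multiset (C × C),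
          s.map (fun p => (c l p.1, c l p.2)) =
            (s.map (fun p => (h l p.1, h l p.2))).map (fun q => (f q.1, f q.2)) := by
        intro s
        rw [Multiset.map_map]
        exact Multiset.map_congr rfl fun p _ => by simp [hf p.1, hf p.2]
      rw [this, this, e4]
end

section
/- In the abstract coloring setting, let c : ℕ → C → X follow an update rule F and h : ℕ → C → Y follow an update rule G, with both F and G injective (as functions of the 4-tuple of their arguments). If the initial colorings c 0 and h 0 are equivalent, then for every l ∈ ℕ, the colorings c l and h l are equivalent (c l ≡ h l). (This is the core of Theorem 1: the coloring computed by a CIN++ network with injective neighbourhood aggregators is equivalent, at every layer, to the Cellular Weisfeiler-Lehman coloring.) -/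
lemma key_aux {C X Y : Type*} (c : C → X) (d : C → Y) (hr : Refines c d)
    (B' : C → Finset C) (U' : C → Finset (C × C)) (σ τ : C)
    (hb : (B' σ).val.map c = (B' τ).val.map c)
    (hu : (U' σ).val.map (fun p => (c p.1, c p.2)) =
        (U' τ).val.map (fun p => (c p.1, c p.2))) :
    (B' σ).val.map d = (B' τ).val.map d ∧
      (U' σ).val.map (fun p => (d p.1, d p.2)) =
        (U' τ).val.map (fun p => (d p.1, d p.2)) := by
  classical
  by_cases hC : Nonempty C
  · obtain ⟨σ₀⟩ := hC
    set φ : X → Y := fun x =>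
      if hx : ∃ ρ : C, c ρ = x then d hx.choose else d σ₀ with hφ
    have hfac : ∀ ρ : C, d ρ = φ (c ρ) := by
      intro ρ
      have hx : ∃ ρ' : C, c ρ' = c ρ := ⟨ρ, rfl⟩
      simp only [hφ, dif_pos hx]
      exact (hr _ _ hx.choose_spec).symm
    constructor
    · have e1 : ∀ s : Multiset C, s.map d = (s.map c).map φ := by
        intro s; rw [Multiset.map_map]; exact Multiset.map_congr rfl
          (fun ρ _ => hfac ρ)
      rw [e1, e1, hb]
    · have e2 : ∀ s : Multiset (C × C),
          s.map (fun p => (d p.1, d p.2)) =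
            (s.map (fun p => (c p.1, c p.2))).map (Prod.map φ φ) := by
        intro s; rw [Multiset.map_map]; exact Multiset.map_congr rfl
          (fun p _ => by simp [Prod.map, hfac p.1, hfac p.2])
      rw [e2, e2, hu]
  · have h1 : (B' σ).val = 0 := by
      apply Multiset.eq_zero_of_forall_notMem
      intro x _; exact hC ⟨x⟩
    have h2 : (B' τ).val = 0 := by
      apply Multiset.eq_zero_of_forall_notMem
      intro x _; exact hC ⟨x⟩
    have h3 : (U' σ).val = 0 := by
      apply Multiset.eq_zero_of_forall_notMem
      intro x _; exact hC ⟨x.1⟩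
    have h4 : (U' τ).val = 0 := by
      apply Multiset.eq_zero_of_forall_notMem
      intro x _; exact hC ⟨x.1⟩
    simp [h1, h2, h3, h4]

/-- two coloring sequences with injective update rules that start
equivalent remain equivalent at every layer (core of Theorem 1). -/
theorem injective_colorings_equivalent {C X Y : Type*}
    (B : C → Finset C) (U D : C → Finset (C × C))
    (c : ℕ → C → X) (h : ℕ → C → Y)
    (F : X → Multiset X → Multiset (X × X) → Multiset (X × X) → X)
    (G : Y → Multiset Y → Multiset (Y × Y) → Multiset (Y × Y) → Y)
    (hc : Follows B U D c F) (hh : Follows B U D h G)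
    (hF : Injective4 F) (hG : Injective4 G)
    (h0 : Refines (c 0) (h 0) ∧ Refines (h 0) (c 0)) :
    ∀ l : ℕ, Refines (c l) (h l) ∧ Refines (h l) (c l) := by
  intro l
  induction l with
  | zero => exact h0
  | succ l ih =>
    obtain ⟨ih1, ih2⟩ := ih
    constructor
    · intro σ τ heq
      rw [hc l σ, hc l τ] at heq
      obtain ⟨ha, hb, hu, hd⟩ := hF _ _ _ _ _ _ _ _ heq
      rw [hh l σ, hh l τ]
      obtain ⟨hb', hu'⟩ := key_aux (c l) (h l) ih1 B U σ τ hb hu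
      obtain ⟨_, hd'⟩ := key_aux (c l) (h l) ih1 B D σ τ hb hd
      rw [ih1 σ τ ha, hb', hu', hd']
    · intro σ τ heq
      rw [hh l σ, hh l τ] at heq
      obtain ⟨ha, hb, hu, hd⟩ := hG _ _ _ _ _ _ _ _ heq
      rw [hc l σ, hc l τ]
      obtain ⟨hb', hu'⟩ := key_aux (h l) (c l) ih2 B U σ τ hb hu
      obtain ⟨_, hd'⟩ := key_aux (h l) (c l) ih2 B D σ τ hb hd
      rw [ih2 σ τ ha, hb', hu', hd']
end

section
/- In the abstract coloring setting, let c : ℕ → C → X and h : ℕ → C → Y follow update rules F and G respectively, with both F and G injective, and suppose the initial colorings c 0 and h 0 are equivalent. Then for every layer l ∈ ℕ and all multisets S, T of cells of C, the multiset image of S under c l equals that of T under c l if and only if the multiset image of S under h l equals that of T under h l. In particular, any pair of multisets of cells distinguished by the Cellular Weisfeiler-Lehman coloring at layer l is also distinguished by the CIN++ coloring at layer l, and conversely. -/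
lemma map_eq_transfer {A X Y : Type*} (f : A → X) (g : A → Y)
    (hfg : ∀ a b, f a = f b → g a = g b) :
    ∀ (S T : Multiset A), S.map f = T.map f → S.map g = T.map g := by
  classical
  intro S
  induction S using Multiset.induction_on with
  | empty =>
    intro T hT
    have : T = 0 := (Multiset.map_eq_zero (f := f)).mp (by simpa using hT.symm)
    subst this; simp
  | cons a S ih =>
    intro T hT
    have ha : f a ∈ T.map f := by rw [← hT]; simp
    obtain ⟨b, hb, hfb⟩ := Multiset.mem_map.mp ha
    have hT' : T = b ::ₘ T.erase b := (Multiset.cons_erase hb).symm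
    rw [hT'] at hT ⊢
    simp only [Multiset.map_cons] at hT ⊢
    rw [hfb] at hT
    have hS := (Multiset.cons_inj_right (f a)).mp hT
    rw [ih _ hS, hfg b a hfb]

/-- two injective coloring sequences that start equivalent
distinguish exactly the same pairs of multisets of cells at every layer. -/
theorem injective_colorings_same_multiset_distinction {C X Y : Type*}
    (B : C → Finset C) (U D : C → Finset (C × C))
    (c : ℕ → C → X) (h : ℕ → C → Y)
    (F : X → Multiset X → Multiset (X × X) → Multiset (X × X) → X)
    (G : Y → Multiset Y → Multiset (Y × Y) → Multiset (Y × Y) → Y)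
    (hc : Follows B U D c F) (hh : Follows B U D h G)
    (hF : Injective4 F) (hG : Injective4 G)
    (h0 : Refines (c 0) (h 0) ∧ Refines (h 0) (c 0)) :
    ∀ (l : ℕ) (S T : Multiset C),
      S.map (c l) = T.map (c l) ↔ S.map (h l) = T.map (h l) := by
  have equiv : ∀ l, (∀ σ τ, c l σ = c l τ → h l σ = h l τ) ∧
      (∀ σ τ, h l σ = h l τ → c l σ = c l τ) := by
    intro l
    induction l with
    | zero => exact h0
    | succ l ih =>
      constructor
      · intro σ τ heq
        rw [hc l σ, hc l τ] at heq
        obtain ⟨h1, h2, h3, h4⟩ := hF _ _ _ _ _ _ _ _ heq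
        rw [hh l σ, hh l τ]
        have hpair : ∀ p q : C × C,
            (c l p.1, c l p.2) = (c l q.1, c l q.2) →
            (h l p.1, h l p.2) = (h l q.1, h l q.2) := by
          intro p q hpq
          rw [Prod.mk.injEq] at hpq ⊢
          exact ⟨ih.1 _ _ hpq.1, ih.1 _ _ hpq.2⟩
        rw [ih.1 σ τ h1, map_eq_transfer _ _ ih.1 _ _ h2,
          map_eq_transfer _ _ hpair _ _ h3, map_eq_transfer _ _ hpair _ _ h4]
      · intro σ τ heq
        rw [hh l σ, hh l τ] at heq
        obtain ⟨h1, h2, h3, h4⟩ := hG _ _ _ _ _ _ _ _ heq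
        rw [hc l σ, hc l τ]
        have hpair : ∀ p q : C × C,
            (h l p.1, h l p.2) = (h l q.1, h l q.2) →
            (c l p.1, c l p.2) = (c l q.1, c l q.2) := by
          intro p q hpq
          rw [Prod.mk.injEq] at hpq ⊢
          exact ⟨ih.2 _ _ hpq.1, ih.2 _ _ hpq.2⟩
        rw [ih.2 σ τ h1, map_eq_transfer _ _ ih.2 _ _ h2,
          map_eq_transfer _ _ hpair _ _ h3, map_eq_transfer _ _ hpair _ _ h4]
  intro l S T
  exact ⟨map_eq_transfer _ _ (equiv l).1 S T, map_eq_transfer _ _ (equiv l).2 S T⟩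
end

section
/- In the abstract coloring setting, let c : ℕ → C → X follow an update rule F with F injective. If for some l ∈ ℕ the colorings c l and c (l+1) are equivalent, then for every m ≥ l, the coloring c m is equivalent to c l; that is, once the injective-hash coloring procedure stops refining the partition of cells, the partition remains fixed at all later iterations. -/
/-- A refinement factors through a function on colors (nonempty domain). -/
lemma refines_factor {C X Y : Type*} [Nonempty C] {c : C → X} {d : C → Y}
    (h : Refines c d) : ∃ g : X → Y, ∀ σ, d σ = g (c σ) := by
  classical
  refine ⟨fun x => if hx : ∃ σ, c σ = x then d hx.choose else d (Classical.arbitrary C), ?_⟩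
  intro σ
  have hx : ∃ τ, c τ = c σ := ⟨σ, rfl⟩
  simp only [dif_pos hx]
  exact (h _ _ hx.choose_spec).symm

/-- Equal multisets of colors stay equal under refinement. -/
lemma refines_map {C X Y : Type*} [Nonempty C] {c : C → X} {d : C → Y}
    (h : Refines c d) {s t : Multiset C}
    (hst : s.map c = t.map c) : s.map d = t.map d := by
  obtain ⟨g, hg⟩ := refines_factor h
  have key : ∀ u : Multiset C, u.map d = (u.map c).map g := by
    intro u
    rw [Multiset.map_map]
    exact Multiset.map_congr rfl (fun x _ => hg x)
  rw [key, key, hst]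

/-- Equal multisets of pairs of colors stay equal under refinement. -/
lemma refines_map_pair {C X Y : Type*} [Nonempty C] {c : C → X} {d : C → Y}
    (h : Refines c d) {s t : Multiset (C × C)}
    (hst : s.map (fun p => (c p.1, c p.2)) = t.map (fun p => (c p.1, c p.2))) :
    s.map (fun p => (d p.1, d p.2)) = t.map (fun p => (d p.1, d p.2)) := by
  obtain ⟨g, hg⟩ := refines_factor h
  have key : ∀ u : Multiset (C × C),
      u.map (fun p => (d p.1, d p.2)) =
      (u.map (fun p => (c p.1, c p.2))).map (fun q => (g q.1, g q.2)) := by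
    intro u
    rw [Multiset.map_map]
    exact Multiset.map_congr rfl (fun x _ => by simp [hg])
  rw [key, key, hst]

/-- once the injective-hash coloring stops refining, it stays
fixed: if the colorings at steps `l` and `l+1` are equivalent, then for every
`m ≥ l` the coloring at step `m` is equivalent to the one at step `l`. -/
theorem stabilization_of_injective_coloring {C X : Type*}
    (B : C → Finset C) (U D : C → Finset (C × C))
    (c : ℕ → C → X)
    (F : X → Multiset X → Multiset (X × X) → Multiset (X × X) → X)
    (hc : Follows B U D c F) (hF : Injective4 F)
    (l : ℕ)
    (hstab : Refines (c l) (c (l + 1)) ∧ Refines (c (l + 1)) (c l)) :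
    ∀ m : ℕ, l ≤ m → Refines (c m) (c l) ∧ Refines (c l) (c m) := by
  intro m hm
  induction m, hm using Nat.le_induction with
  | base => exact ⟨fun σ τ h => h, fun σ τ h => h⟩
  | succ m hm ih =>
    constructor
    · -- c (m+1) refines c l
      intro σ τ h
      rw [hc m σ, hc m τ] at h
      obtain ⟨h1, _, _, _⟩ := hF _ _ _ _ _ _ _ _ h
      exact ih.1 σ τ h1
    · -- c l refines c (m+1)
      intro σ τ h
      haveI : Nonempty C := ⟨σ⟩
      have hl1 : c (l + 1) σ = c (l + 1) τ := hstab.1 σ τ h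
      rw [hc l σ, hc l τ] at hl1
      obtain ⟨_, hB, hU, hD⟩ := hF _ _ _ _ _ _ _ _ hl1
      rw [hc m σ, hc m τ]
      rw [ih.2 σ τ h, refines_map ih.2 hB, refines_map_pair ih.2 hU,
        refines_map_pair ih.2 hD]
end

section
/- In the abstract coloring setting with C a finite type, let c : ℕ → C → X follow an update rule F with F injective. Then there exists L ≤ card C such that for every m ≥ L, the coloring c m is equivalent to c L; that is, the injective-hash coloring procedure on a finite cell complex converges after at most card C iterations. -/
private lemma map_lift {α β γ : Type*} {f : α → β} {g : α → γ}
    (h : ∀ a b, f a = f b → g a = g b) {s t : Multiset α}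
    (hs : s.map f = t.map f) : s.map g = t.map g := by
  rw [← Multiset.rel_eq] at hs ⊢
  rw [Multiset.rel_map] at hs ⊢
  exact hs.mono (fun a _ b _ hab => h a b hab)



/-- on a finite type of cells, the injective-hash coloring
procedure converges after at most `card C` iterations. -/
theorem injective_coloring_converges {C X : Type*} [Fintype C]
    (B : C → Finset C) (U D : C → Finset (C × C))
    (c : ℕ → C → X)
    (F : X → Multiset X → Multiset (X × X) → Multiset (X × X) → X)
    (hc : Follows B U D c F) (hF : Injective4 F) :
    ∃ L : ℕ, L ≤ Fintype.card C ∧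
      ∀ m : ℕ, L ≤ m → Refines (c m) (c L) ∧ Refines (c L) (c m) := by
  classical
  have hstep : ∀ l σ τ, c (l+1) σ = c (l+1) τ → c l σ = c l τ := by
    intro l σ τ h
    rw [hc l σ, hc l τ] at h
    exact (hF _ _ _ _ _ _ _ _ h).1
  have hfwd : ∀ l, (∀ σ τ, c l σ = c l τ → c (l+1) σ = c (l+1) τ) →
      ∀ σ τ, c (l+1) σ = c (l+1) τ → c (l+2) σ = c (l+2) τ := by
    intro l hl σ τ h
    rw [hc l σ, hc l τ] at h
    obtain ⟨h1, h2, h3, h4⟩ := hF _ _ _ _ _ _ _ _ h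
    have hl2 : ∀ p q : C × C, (c l p.1, c l p.2) = (c l q.1, c l q.2) →
        (c (l+1) p.1, c (l+1) p.2) = (c (l+1) q.1, c (l+1) q.2) := by
      intro p q hpq
      simp only [Prod.mk.injEq] at hpq ⊢
      exact ⟨hl _ _ hpq.1, hl _ _ hpq.2⟩
    rw [hc (l+1) σ, hc (l+1) τ, hl σ τ h1, map_lift hl h2, map_lift hl2 h3,
      map_lift hl2 h4]
  set n : ℕ → ℕ := fun l => Nat.card (Quotient (Setoid.ker (c l))) with hn
  have hphi : ∀ l, ∃ φ : Quotient (Setoid.ker (c (l+1))) → Quotient (Setoid.ker (c l)),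
      Function.Surjective φ ∧ ∀ a : C, φ (Quotient.mk _ a) = Quotient.mk _ a := by
    intro l
    refine ⟨Quotient.map' id (fun a b h => hstep l a b h), ?_, fun a => rfl⟩
    intro q
    obtain ⟨a, rfl⟩ := Quotient.exists_rep q
    exact ⟨Quotient.mk _ a, rfl⟩
  have hmono : ∀ l, n l ≤ n (l+1) := by
    intro l
    obtain ⟨φ, hs, -⟩ := hphi l
    exact Nat.card_le_card_of_surjective φ hs
  have hbound : ∀ l, n l ≤ Fintype.card C := by
    intro l
    have := Nat.card_le_card_of_surjective (Quotient.mk (Setoid.ker (c l)))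
      (fun q => Quotient.exists_rep q)
    rw [hn]
    rw [← Nat.card_eq_fintype_card (α := C)]
    exact this
  -- find L ≤ card C with n L = n (L+1)
  have hex : ∃ L ≤ Fintype.card C, n L = n (L+1) := by
    by_contra hcon
    push_neg at hcon
    have hlt : ∀ l ≤ Fintype.card C, n l < n (l+1) :=
      fun l hl => lt_of_le_of_ne (hmono l) (hcon l hl)
    by_cases hE : IsEmpty C
    · have : n 0 < n 1 := hlt 0 (Nat.zero_le _)
      have h0 : n 1 ≤ Fintype.card C := hbound 1
      have : Fintype.card C = 0 := Fintype.card_eq_zero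
      omega
    · have hne : Nonempty C := not_isEmpty_iff.mp hE
      have h1 : 1 ≤ n 0 := Nat.one_le_iff_ne_zero.mpr (by
        have : Nonempty (Quotient (Setoid.ker (c 0))) := Nonempty.map (Quotient.mk _) hne
        simp [hn, Nat.card_pos.ne'])
      have key : ∀ k ≤ Fintype.card C + 1, n 0 + k ≤ n k := by
        intro k hk
        induction k with
        | zero => omega
        | succ k ih =>
          have h2 := hlt k (by omega)
          have := ih (by omega)
          omega
      have := key (Fintype.card C + 1) le_rfl
      have := hbound (Fintype.card C + 1)
      omega
  obtain ⟨L, hL, hcard⟩ := hex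
  refine ⟨L, hL, ?_⟩
  -- c L refines c (L+1)
  have hLfwd : ∀ σ τ, c L σ = c L τ → c (L+1) σ = c (L+1) τ := by
    obtain ⟨φ, hs, hmk⟩ := hphi L
    have hbij : Function.Bijective φ :=
      (Nat.bijective_iff_surjective_and_card φ).mpr ⟨hs, hcard.symm⟩
    intro σ τ h
    have hq : (Quotient.mk (Setoid.ker (c L)) σ) = Quotient.mk _ τ := Quotient.sound h
    rw [← hmk σ, ← hmk τ] at hq
    have := hbij.injective hq
    exact Quotient.exact this
  -- stability propagates
  have hstab : ∀ m, L ≤ m → ∀ σ τ, c m σ = c m τ → c (m+1) σ = c (m+1) τ := by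
    intro m hm
    induction m, hm using Nat.le_induction with
    | base => exact hLfwd
    | succ m hm ih => exact hfwd m ih
  refine fun m hm => ?_
  induction m, hm using Nat.le_induction with
  | base => exact ⟨fun σ τ h => h, fun σ τ h => h⟩
  | succ m hm ih =>
    obtain ⟨ih1, ih2⟩ := ih
    exact ⟨fun σ τ h => ih1 σ τ (hstep m σ τ h),
      fun σ τ h => hstab m hm σ τ (ih2 σ τ h)⟩
end
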